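/- Let μ be a probability measure on ℝ^d that is absolutely continuous with respect to Lebesgue measure and has bounded support, let r > 0 and s > 0, and let X_1, X_2, … be i.i.d. with law μ. Then for every ε > 0, P( sup_{z ∈ supp(μ)} |SD^r_s(z | X_{1:n}) − SD^r_s(z | μ)| > ε ) → 0 as n → ∞. -/

import Mathlib

/-!
If `supp μ ⊆ closedBall 0 R`, every center `c` with `‖c - z‖ = r`, `z ∈ supp μ`, lies in the
compact ball `closedBall 0 (R + r)`, on which the kernel `c ↦ sig_s (r² - ‖x - c‖²)` is Lipschitz
uniformly in `x ∈ closedBall 0 R`. Averaging against `μ` or against the sample keeps this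
Lipschitz constant, so the empirical and population integrals are equi-Lipschitz in the center.
The strong law of large numbers gives convergence in probability at the finitely many points of a
`δ`-net of the ball, and the Lipschitz bound spreads it to the whole ball. Finally, the infima over
a sphere of centers differ by at most the largest difference of the integrands.
-/

open MeasureTheory

/-- The sigmoid function with scale `s`. -/
noncomputable def sig (s t : ℝ) : ℝ := 1 / (1 + Real.exp (-t / s))

/-- The (smoothed, `s > 0`) sphere depth
`SD^r_s(z|μ) = inf_{‖c−z‖=r} ∫ sig_s(r² − ‖x − c‖²) dμ(x)`. -/
noncomputable def SDs (d : ℕ) (r s : ℝ) (z : EuclideanSpace ℝ (Fin d))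
    (μ : Measure (EuclideanSpace ℝ (Fin d))) : ℝ :=
  ⨅ c : Metric.sphere z r, ∫ x, sig s (r ^ 2 - ‖x - (c : EuclideanSpace ℝ (Fin d))‖ ^ 2) ∂μ

/-- The sphere depth of the empirical measure of the samples `x₁,…,xₙ`:
`SD^r_s(z|x_{1:n}) = inf_{‖c−z‖=r} (1/n) Σᵢ sig_s(r² − ‖xᵢ − c‖²)`. -/
noncomputable def SDemp (d : ℕ) (r s : ℝ) (z : EuclideanSpace ℝ (Fin d)) (n : ℕ)
    (x : Fin n → EuclideanSpace ℝ (Fin d)) : ℝ :=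
  ⨅ c : Metric.sphere z r,
    (n : ℝ)⁻¹ * ∑ i, sig s (r ^ 2 - ‖x i - (c : EuclideanSpace ℝ (Fin d))‖ ^ 2)

/-- The (topological) support of a measure: points all of whose neighborhoods have
positive measure. -/
def msupport {E : Type*} [TopologicalSpace E] [MeasurableSpace E] (μ : Measure E) : Set E :=
  {x | ∀ U ∈ nhds x, μ U ≠ 0}

open Filter Metric ProbabilityTheory Topology
open scoped NNReal

lemma sig_eq_sigmoid (s : ℝ) : sig s = Real.sigmoid ∘ (s⁻¹ • ·) := by
  ext t
  simp only [sig, Function.comp_apply, Real.sigmoid_def, smul_eq_mul, one_div]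
  ring_nf

lemma sig_nonneg (s t : ℝ) : 0 ≤ sig s t := by
  simpa [sig_eq_sigmoid] using Real.sigmoid_nonneg _

lemma sig_le_one (s t : ℝ) : sig s t ≤ 1 := by
  simpa [sig_eq_sigmoid] using Real.sigmoid_le_one _

@[fun_prop]
lemma continuous_sig (s : ℝ) : Continuous (sig s) := by
  rw [sig_eq_sigmoid]
  exact continuous_sigmoid.comp (continuous_const_smul _)

lemma lipschitzWith_sigmoid : LipschitzWith 4⁻¹ Real.sigmoid := by
  refine lipschitzWith_of_nnnorm_deriv_le differentiable_sigmoid fun x => ?_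
  rw [Real.deriv_sigmoid, ← NNReal.coe_le_coe, coe_nnnorm, Real.norm_eq_abs,
    abs_of_nonneg (mul_nonneg (Real.sigmoid_nonneg x) (by linarith [Real.sigmoid_le_one x]))]
  push_cast
  nlinarith [sq_nonneg (Real.sigmoid x - 2⁻¹)]

lemma lipschitzWith_sig (s : ℝ) : LipschitzWith (4⁻¹ * ‖s⁻¹‖₊) (sig s) := by
  rw [sig_eq_sigmoid]
  exact lipschitzWith_sigmoid.comp (lipschitzWith_smul s⁻¹)

section Kernel

variable {E : Type*} [SeminormedAddCommGroup E]

lemma lipschitzOnWith_sub_sq_norm_sub (r : ℝ) {R ρ : ℝ} {x : E} (hx : ‖x‖ ≤ R) :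
    LipschitzOnWith (2 * (R + ρ)).toNNReal (fun c => r ^ 2 - ‖x - c‖ ^ 2) (closedBall 0 ρ) := by
  refine LipschitzOnWith.of_dist_le_mul fun c hc c' hc' => ?_
  rw [mem_closedBall_zero_iff] at hc hc'
  have ha : ‖x - c‖ ≤ R + ρ := (norm_sub_le x c).trans (add_le_add hx hc)
  have hb : ‖x - c'‖ ≤ R + ρ := (norm_sub_le x c').trans (add_le_add hx hc')
  have hab : |‖x - c'‖ - ‖x - c‖| ≤ dist c c' := by
    simpa [dist_eq_norm] using abs_norm_sub_norm_le (x - c') (x - c)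
  calc dist (r ^ 2 - ‖x - c‖ ^ 2) (r ^ 2 - ‖x - c'‖ ^ 2)
      = (‖x - c'‖ + ‖x - c‖) * |‖x - c'‖ - ‖x - c‖| := by
        rw [Real.dist_eq, ← abs_of_nonneg (by positivity : 0 ≤ ‖x - c'‖ + ‖x - c‖), ← abs_mul]
        ring_nf
    _ ≤ 2 * (R + ρ) * dist c c' :=
        mul_le_mul (by linarith) hab (abs_nonneg _) (by linarith [norm_nonneg (x - c)])
    _ ≤ (2 * (R + ρ)).toNNReal * dist c c' := by
        gcongr
        exact Real.le_coe_toNNReal _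

lemma lipschitzOnWith_sig_sub_sq_norm_sub (r s : ℝ) {R ρ : ℝ} {x : E} (hx : ‖x‖ ≤ R) :
    LipschitzOnWith (4⁻¹ * ‖s⁻¹‖₊ * (2 * (R + ρ)).toNNReal)
      (fun c => sig s (r ^ 2 - ‖x - c‖ ^ 2)) (closedBall 0 ρ) :=
  (lipschitzWith_sig s).comp_lipschitzOnWith (lipschitzOnWith_sub_sq_norm_sub r hx)

lemma continuous_sig_sub_sq_norm_sub (r s : ℝ) (c : E) :
    Continuous fun x => sig s (r ^ 2 - ‖x - c‖ ^ 2) := by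
  fun_prop

lemma integrable_sig_sub_sq_norm_sub [MeasurableSpace E] [OpensMeasurableSpace E]
    (μ : Measure E) [IsFiniteMeasure μ] (r s : ℝ) (c : E) :
    Integrable (fun x => sig s (r ^ 2 - ‖x - c‖ ^ 2)) μ :=
  .of_bound (continuous_sig_sub_sq_norm_sub r s c).aestronglyMeasurable 1 (ae_of_all _ fun x => by
    simpa [abs_of_nonneg (sig_nonneg _ _)] using sig_le_one s _)

end Kernel

section LipschitzOnSet

variable {α : Type*} [PseudoMetricSpace α] {L : ℝ≥0} {K : Set α}

lemma LipschitzOnWith.inv_natCast_mul_sum {n : ℕ} {f : Fin n → α → ℝ}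
    (hf : ∀ i, LipschitzOnWith L (f i) K) :
    LipschitzOnWith L (fun a => (n : ℝ)⁻¹ * ∑ i, f i a) K := by
  refine LipschitzOnWith.of_dist_le_mul fun a ha b hb => ?_
  calc dist ((n : ℝ)⁻¹ * ∑ i, f i a) ((n : ℝ)⁻¹ * ∑ i, f i b)
      = (n : ℝ)⁻¹ * |∑ i, (f i a - f i b)| := by
        rw [Real.dist_eq, ← mul_sub, ← Finset.sum_sub_distrib, abs_mul,
          abs_of_nonneg (by positivity)]
    _ ≤ (n : ℝ)⁻¹ * (n * (L * dist a b)) := by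
        gcongr
        refine (Finset.abs_sum_le_sum_abs _ _).trans ?_
        simpa [← Real.dist_eq] using
          Finset.sum_le_sum fun i (_ : i ∈ Finset.univ) => (hf i).dist_le_mul a ha b hb
    _ ≤ L * dist a b := by
        rcases n.eq_zero_or_pos with rfl | hn
        · simp; positivity
        · rw [inv_mul_cancel_left₀ (by positivity)]

lemma LipschitzOnWith.integral {β : Type*} [MeasurableSpace β] {μ : Measure β}
    [IsProbabilityMeasure μ] {f : α → β → ℝ} (hint : ∀ a ∈ K, Integrable (f a) μ)
    (hf : ∀ᵐ x ∂μ, LipschitzOnWith L (f · x) K) :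
    LipschitzOnWith L (fun a => ∫ x, f a x ∂μ) K := by
  refine LipschitzOnWith.of_dist_le_mul fun a ha b hb => ?_
  calc dist (∫ x, f a x ∂μ) (∫ x, f b x ∂μ)
      = ‖∫ x, (f a x - f b x) ∂μ‖ := by
        rw [dist_eq_norm, integral_sub (hint a ha) (hint b hb)]
    _ ≤ ∫ _x, (L * dist a b : ℝ) ∂μ := by
        refine norm_integral_le_of_norm_le (integrable_const _) (hf.mono fun x hx => ?_)
        rw [← dist_eq_norm]
        exact hx.dist_le_mul a ha b hb
    _ = L * dist a b := by simp

lemma abs_sub_le_abs_sub_add_of_lipschitzOnWith {f g : α → ℝ} (hf : LipschitzOnWith L f K)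
    (hg : LipschitzOnWith L g K) {x y : α} (hx : x ∈ K) (hy : y ∈ K) :
    |f x - g x| ≤ |f y - g y| + 2 * L * dist x y := by
  have hfxy := hf.dist_le_mul x hx y hy
  have hgxy := hg.dist_le_mul y hy x hx
  rw [Real.dist_eq] at hfxy hgxy
  rw [dist_comm] at hgxy
  linarith [abs_sub_le (f x) (f y) (g x), abs_sub_le (f y) (g y) (g x)]

theorem tendsto_measure_exists_lt_abs_sub {Ω : Type*} [MeasurableSpace Ω] {P : Measure Ω}
    (hK : TotallyBounded K) {F : ℕ → Ω → α → ℝ} {G : α → ℝ}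
    (hF : ∀ᵐ ω ∂P, ∀ n, LipschitzOnWith L (F n ω) K) (hG : LipschitzOnWith L G K)
    (hFG : ∀ y ∈ K, TendstoInMeasure P (fun n ω => F n ω y) atTop (fun _ => G y))
    {ε : ℝ} (hε : 0 < ε) :
    Tendsto (fun n => P {ω | ∃ x ∈ K, ε < |F n ω x - G x|}) atTop (𝓝 0) := by
  set δ := ε / (4 * (L + 1))
  have hδ : 0 < δ := by positivity
  have hLδ : 2 * L * δ ≤ ε / 2 := by
    rw [mul_div_assoc', div_le_div_iff₀ (by positivity) two_pos]
    nlinarith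
  obtain ⟨N', hNK, hNfin, hcover⟩ := finite_approx_of_totallyBounded hK δ hδ
  obtain ⟨N, rfl⟩ := hNfin.exists_finset_coe
  have hbad : ∀ n, P {ω | ∃ x ∈ K, ε < |F n ω x - G x|} ≤
      ∑ y ∈ N, P {ω | ENNReal.ofReal (ε / 2) ≤ edist (F n ω y) (G y)} := by
    intro n
    refine (measure_mono_ae (hF.mono fun ω hω => ?_)).trans (measure_biUnion_finset_le _ _)
    rintro ⟨x, hx, hεx⟩
    obtain ⟨y, hy, hxy⟩ := Set.mem_iUnion₂.1 (hcover hx)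
    refine Set.mem_iUnion₂.2 ⟨y, hy, ?_⟩
    rw [Set.mem_ofPred_eq, edist_dist, ENNReal.ofReal_le_ofReal_iff dist_nonneg, Real.dist_eq]
    have hnear : 2 * L * dist x y ≤ 2 * L * δ := by gcongr; exact (mem_ball.1 hxy).le
    linarith [abs_sub_le_abs_sub_add_of_lipschitzOnWith (hω n) hG hx (hNK hy)]
  refine tendsto_of_tendsto_of_tendsto_of_le_of_le tendsto_const_nhds ?_ (fun _ => zero_le) hbad
  simpa using tendsto_finsetSum N fun y hy => hFG y (hNK hy) _ (by positivity)

end LipschitzOnSet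

lemma abs_ciInf_sub_ciInf_le {ι : Sort*} {f g : ι → ℝ} (hf : BddBelow (Set.range f))
    (hg : BddBelow (Set.range g)) {B : ℝ} (hB : 0 ≤ B) (h : ∀ i, |f i - g i| ≤ B) :
    |(⨅ i, f i) - ⨅ i, g i| ≤ B := by
  rcases isEmpty_or_nonempty ι with hι | hι
  · simpa using hB
  rw [abs_sub_le_iff]
  constructor
  · have : ∀ i, (⨅ j, f j) - B ≤ g i := fun i => by
      linarith [ciInf_le hf i, (abs_le.1 (h i)).2]
    linarith [le_ciInf this]
  · have : ∀ i, (⨅ j, g j) - B ≤ f i := fun i => by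
      linarith [ciInf_le hg i, (abs_le.1 (h i)).1]
    linarith [le_ciInf this]

lemma abs_SDemp_sub_SDs_le {d n : ℕ} {r s B : ℝ} {z : EuclideanSpace ℝ (Fin d)}
    {x : Fin n → EuclideanSpace ℝ (Fin d)} {μ : Measure (EuclideanSpace ℝ (Fin d))} (hB : 0 ≤ B)
    (h : ∀ c ∈ sphere z r, |(n : ℝ)⁻¹ * ∑ i, sig s (r ^ 2 - ‖x i - c‖ ^ 2) -
      ∫ y, sig s (r ^ 2 - ‖y - c‖ ^ 2) ∂μ| ≤ B) :
    |SDemp d r s z n x - SDs d r s z μ| ≤ B :=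
  abs_ciInf_sub_ciInf_le
    ⟨0, Set.forall_mem_range.2 fun _ =>
      mul_nonneg (by positivity) (Finset.sum_nonneg fun _ _ => sig_nonneg _ _)⟩
    ⟨0, Set.forall_mem_range.2 fun _ => integral_nonneg fun _ => sig_nonneg _ _⟩
    hB fun c => h c c.2

lemma msupport_eq_support {E : Type*} [TopologicalSpace E] [MeasurableSpace E] (μ : Measure E) :
    msupport μ = μ.support := by
  ext x
  simp [msupport, Measure.mem_support_iff_forall, pos_iff_ne_zero]

lemma tendstoInMeasure_inv_natCast_mul_sum {E : Type*} [MeasurableSpace E] {μ : Measure E}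
    {Ω : Type*} [MeasurableSpace Ω] {P : Measure Ω} [IsProbabilityMeasure P]
    {X : ℕ → Ω → E} (hXmeas : ∀ i, Measurable (X i)) (hXlaw : ∀ i, P.map (X i) = μ)
    (hXindep : iIndepFun X P) {f : E → ℝ} (hf : Measurable f) (hfμ : Integrable f μ) :
    TendstoInMeasure P (fun (n : ℕ) ω => (n : ℝ)⁻¹ * ∑ i : Fin n, f (X i ω)) atTop
      (fun _ => ∫ x, f x ∂μ) := by
  have hident : ∀ i, IdentDistrib (f ∘ X i) (f ∘ X 0) P P := fun i =>
    ⟨(hf.comp (hXmeas i)).aemeasurable, (hf.comp (hXmeas 0)).aemeasurable, by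
      rw [← Measure.map_map hf (hXmeas i), ← Measure.map_map hf (hXmeas 0), hXlaw, hXlaw]⟩
  have hmean : ∫ ω, f (X 0 ω) ∂P = ∫ x, f x ∂μ := by
    rw [← hXlaw 0, integral_map (hXmeas 0).aemeasurable hf.aestronglyMeasurable]
  have hint : Integrable (f ∘ X 0) P := by
    rw [← hXlaw 0] at hfμ
    exact hfμ.comp_measurable (hXmeas 0)
  have hslln := strong_law_ae_real (fun i => f ∘ X i) hint
    (fun i j hij => (hXindep.indepFun hij).comp hf hf) hident
  refine tendstoInMeasure_of_tendsto_ae (fun n => Measurable.aestronglyMeasurable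
    (measurable_const.mul (Finset.measurable_sum _ fun i _ => hf.comp (hXmeas i)))) ?_
  filter_upwards [hslln] with ω hω
  simpa [div_eq_inv_mul, Fin.sum_univ_eq_sum_range (fun i => f (X i ω)), hmean] using hω

open ProbabilityTheory in
theorem stmt_16_general (d : ℕ) (μ : Measure (EuclideanSpace ℝ (Fin d))) [IsProbabilityMeasure μ]
    (hbdd : Bornology.IsBounded (msupport μ))
    (r s : ℝ)
    {Ω : Type*} [MeasurableSpace Ω] (P : Measure Ω) [IsProbabilityMeasure P]
    (X : ℕ → Ω → EuclideanSpace ℝ (Fin d))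
    (hXmeas : ∀ i, Measurable (X i)) (hXlaw : ∀ i, P.map (X i) = μ)
    (hXindep : iIndepFun X P) :
    ∀ ε > (0 : ℝ),
      Filter.Tendsto (fun n : ℕ =>
          P {ω | ε < ⨆ z : msupport μ,
            |SDemp d r s (z : EuclideanSpace ℝ (Fin d)) n (fun i : Fin n => X i ω) -
              SDs d r s (z : EuclideanSpace ℝ (Fin d)) μ|})
        Filter.atTop (nhds 0) := by
  intro ε hε
  obtain ⟨R, hR⟩ := hbdd.subset_closedBall 0
  have hμR : ∀ᵐ x ∂μ, ‖x‖ ≤ R := eventually_of_mem Measure.support_mem_ae fun x hx =>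
    mem_closedBall_zero_iff.1 (hR (msupport_eq_support μ ▸ hx))
  have hXR : ∀ᵐ ω ∂P, ∀ i, ‖X i ω‖ ≤ R :=
    ae_all_iff.2 fun i => ae_of_ae_map (hXmeas i).aemeasurable ((hXlaw i).symm ▸ hμR)
  have hF : ∀ᵐ ω ∂P, ∀ n : ℕ, LipschitzOnWith (4⁻¹ * ‖s⁻¹‖₊ * (2 * (R + (R + r))).toNNReal)
      (fun c => (n : ℝ)⁻¹ * ∑ i : Fin n, sig s (r ^ 2 - ‖X i ω - c‖ ^ 2)) (closedBall 0 (R + r)) :=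
    hXR.mono fun ω hω n => LipschitzOnWith.inv_natCast_mul_sum fun i =>
      lipschitzOnWith_sig_sub_sq_norm_sub r s (hω i)
  have hG : LipschitzOnWith (4⁻¹ * ‖s⁻¹‖₊ * (2 * (R + (R + r))).toNNReal)
      (fun c => ∫ x, sig s (r ^ 2 - ‖x - c‖ ^ 2) ∂μ) (closedBall 0 (R + r)) :=
    LipschitzOnWith.integral (fun c _ => integrable_sig_sub_sq_norm_sub μ r s c)
      (hμR.mono fun x hx => lipschitzOnWith_sig_sub_sq_norm_sub r s hx)
  have hunif := tendsto_measure_exists_lt_abs_sub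
    (isCompact_closedBall (0 : EuclideanSpace ℝ (Fin d)) (R + r)).totallyBounded hF hG
    (fun c _ => tendstoInMeasure_inv_natCast_mul_sum hXmeas hXlaw hXindep
      (f := fun x => sig s (r ^ 2 - ‖x - c‖ ^ 2)) (continuous_sig_sub_sq_norm_sub r s c).measurable
      (integrable_sig_sub_sq_norm_sub μ r s c)) hε
  refine tendsto_of_tendsto_of_tendsto_of_le_of_le tendsto_const_nhds hunif (fun _ => zero_le)
    fun n => measure_mono fun ω hω => ?_
  rw [Set.mem_ofPred_eq]
  by_contra! hclose
  refine hω.not_ge (Real.iSup_le (fun z => abs_SDemp_sub_SDs_le hε.le fun c hc => hclose c ?_)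
    hε.le)
  calc dist c 0 ≤ dist c z + dist (z : EuclideanSpace ℝ (Fin d)) 0 := dist_triangle _ _ _
    _ ≤ R + r := by linarith [mem_sphere.1 hc, mem_closedBall.1 (hR z.2)]

open ProbabilityTheory in
/-- Uniform consistency on the support: if `μ` is absolutely continuous with bounded
support, the supremum over the support of the deviation of the empirical sphere depth
tends to zero in probability. -/
theorem stmt_16 (d : ℕ) (μ : Measure (EuclideanSpace ℝ (Fin d))) [IsProbabilityMeasure μ]
    (habs : μ ≪ volume) (hbdd : Bornology.IsBounded (msupport μ))
    (r s : ℝ) (hr : 0 < r) (hs : 0 < s)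
    {Ω : Type*} [MeasurableSpace Ω] (P : Measure Ω) [IsProbabilityMeasure P]
    (X : ℕ → Ω → EuclideanSpace ℝ (Fin d))
    (hXmeas : ∀ i, Measurable (X i)) (hXlaw : ∀ i, P.map (X i) = μ)
    (hXindep : iIndepFun X P) :
    ∀ ε > (0 : ℝ),
      Filter.Tendsto (fun n : ℕ =>
          P {ω | ε < ⨆ z : msupport μ,
            |SDemp d r s (z : EuclideanSpace ℝ (Fin d)) n (fun i : Fin n => X i ω) -
              SDs d r s (z : EuclideanSpace ℝ (Fin d)) μ|})
        Filter.atTop (nhds 0) :=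
  stmt_16_general d μ hbdd r s P X hXmeas hXlaw hXindep
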